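/- arXiv:1411.3304 — 2 statements merged into one kernel-verified Lean document; each statement's English description precedes it below -/
import Mathlib

section
/- Let Φ = ∀x_1…∀x_k φ(x_1,…,x_k) be a universal sentence with φ quantifier-free in a language L (logic without equality), let α(y_1,…,y_m) be a quantifier-free L-formula, and let c_1,…,c_m be constants not occurring in Φ or α. Let τ_{ij} (i = 1,…,n, j = 1,…,k) and σ_{i1},…,σ_{im} (i = 1,…,n) be closed terms of L ∪ {c_1,…,c_m}. Set F := ⋀_{i=1}^n φ(τ_{i1},…,τ_{ik}) and, for each i, let F_i be the result of substituting σ_{i1},…,σ_{im} for c_1,…,c_m throughout F. If some truth assignment to atomic sentences satisfies F ∧ ⋀_{i=1}^n F_i, then some truth assignment satisfies ⋀_{i=1}^n ( φ(τ_{i1},…,τ_{ik}) ∧ (α(σ_{i1},…,σ_{im}) → α(c_1,…,c_m)) ). -/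
namespace HCS

/-- A first-order language: function and relation symbols with arities. -/
structure Lang where
  Func : ℕ → Type
  Rel : ℕ → Type

/-- Terms of a language `L` with variables from `V`. -/
inductive Tm (L : Lang) (V : Type) : Type where
  | var : V → Tm L V
  | func : {k : ℕ} → L.Func k → (Fin k → Tm L V) → Tm L V

/-- Simultaneous substitution of terms for variables in a term. -/
def Tm.subst {L : Lang} {V W : Type} (s : V → Tm L W) : Tm L V → Tm L W
  | .var v => s v
  | .func f ts => .func f (fun i => (ts i).subst s)

/-- Quantifier-free formulas of `L` with variables from `V`. -/
inductive QF (L : Lang) (V : Type) : Type where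
  | tru : QF L V
  | fls : QF L V
  | atom : {k : ℕ} → L.Rel k → (Fin k → Tm L V) → QF L V
  | not : QF L V → QF L V
  | and : QF L V → QF L V → QF L V
  | or : QF L V → QF L V → QF L V
  | imp : QF L V → QF L V → QF L V

/-- Substitution of terms for variables in a quantifier-free formula. -/
def QF.subst {L : Lang} {V W : Type} (s : V → Tm L W) : QF L V → QF L W
  | .tru => .tru
  | .fls => .fls
  | .atom r ts => .atom r (fun i => (ts i).subst s)
  | .not a => .not (a.subst s)
  | .and a b => .and (a.subst s) (b.subst s)
  | .or a b => .or (a.subst s) (b.subst s)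
  | .imp a b => .imp (a.subst s) (b.subst s)

/-- An atomic formula: a relation symbol applied to terms. -/
abbrev Atom (L : Lang) (V : Type) : Type := Σ k, L.Rel k × (Fin k → Tm L V)

/-- A truth assignment to atomic formulas. -/
abbrev Assignment (L : Lang) (V : Type) : Type := Atom L V → Bool

/-- Propositional evaluation of a quantifier-free formula under a truth
assignment to its atomic subformulas. -/
def QF.eval {L : Lang} {V : Type} (A : Assignment L V) : QF L V → Bool
  | .tru => true
  | .fls => false
  | .atom r ts => A ⟨_, r, ts⟩
  | .not a => !a.eval A
  | .and a b => a.eval A && b.eval A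
  | .or a b => a.eval A || b.eval A
  | .imp a b => !a.eval A || b.eval A

/-- Conjunction of a list of quantifier-free formulas. -/
def QF.bigAnd {L : Lang} {V : Type} (l : List (QF L V)) : QF L V := l.foldr .and .tru

/-- Disjunction of a list of quantifier-free formulas. -/
def QF.bigOr {L : Lang} {V : Type} (l : List (QF L V)) : QF L V := l.foldr .or .fls

/-- The list of atomic subformulas of a quantifier-free formula. -/
def QF.atomList {L : Lang} {V : Type} : QF L V → List (Atom L V)
  | .tru => []
  | .fls => []
  | .atom r ts => [⟨_, r, ts⟩]
  | .not a => a.atomList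
  | .and a b => a.atomList ++ b.atomList
  | .or a b => a.atomList ++ b.atomList
  | .imp a b => a.atomList ++ b.atomList

/-- A structure for the language `L` (with nonempty domain); `=` is not built
in: it is an ordinary relation symbol of `L`, interpreted arbitrarily. -/
structure Str (L : Lang) where
  Dom : Type
  nonempty : Nonempty Dom
  F : {k : ℕ} → L.Func k → (Fin k → Dom) → Dom
  R : {k : ℕ} → L.Rel k → (Fin k → Dom) → Prop

/-- Realization of a term in a structure under a variable valuation. -/
def Tm.realize {L : Lang} {V : Type} (M : Str L) (v : V → M.Dom) : Tm L V → M.Dom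
  | .var x => v x
  | .func f ts => M.F f (fun i => (ts i).realize M v)

/-- Realization (truth) of a quantifier-free formula in a structure under a
variable valuation. -/
def QF.realize {L : Lang} {V : Type} (M : Str L) (v : V → M.Dom) : QF L V → Prop
  | .tru => True
  | .fls => False
  | .atom r ts => M.R r (fun i => (ts i).realize M v)
  | .not a => ¬ a.realize M v
  | .and a b => a.realize M v ∧ b.realize M v
  | .or a b => a.realize M v ∨ b.realize M v
  | .imp a b => a.realize M v → b.realize M v

end HCS

namespace HCS

theorem Tm.subst_var' {L : Lang} {V : Type} : ∀ t : Tm L V, t.subst Tm.var = t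
  | .var _ => rfl
  | .func f ts => by
      simp only [Tm.subst]
      congr 1
      funext i
      exact Tm.subst_var' (ts i)

theorem QF.subst_var' {L : Lang} {V : Type} : ∀ ψ : QF L V, ψ.subst Tm.var = ψ
  | .tru => rfl
  | .fls => rfl
  | .atom r ts => by
      simp only [QF.subst]
      congr 1
      funext i
      exact Tm.subst_var' (ts i)
  | .not a => by simp only [QF.subst, QF.subst_var' a]
  | .and a b => by simp only [QF.subst, QF.subst_var' a, QF.subst_var' b]
  | .or a b => by simp only [QF.subst, QF.subst_var' a, QF.subst_var' b]
  | .imp a b => by simp only [QF.subst, QF.subst_var' a, QF.subst_var' b]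

/-- Pull back an assignment along a substitution. -/
def Assignment.pull {L : Lang} {V W : Type} (A : Assignment L W) (s : V → Tm L W) :
    Assignment L V :=
  fun a => A ⟨a.1, a.2.1, fun j => (a.2.2 j).subst s⟩

theorem eval_subst {L : Lang} {V W : Type} (A : Assignment L W) (s : V → Tm L W) :
    ∀ ψ : QF L V, QF.eval A (ψ.subst s) = QF.eval (A.pull s) ψ
  | .tru => rfl
  | .fls => rfl
  | .atom r ts => rfl
  | .not a => by simp only [QF.subst, QF.eval, eval_subst A s a]
  | .and a b => by simp only [QF.subst, QF.eval, eval_subst A s a, eval_subst A s b]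
  | .or a b => by simp only [QF.subst, QF.eval, eval_subst A s a, eval_subst A s b]
  | .imp a b => by simp only [QF.subst, QF.eval, eval_subst A s a, eval_subst A s b]

theorem eval_bigAnd {L : Lang} {V : Type} (A : Assignment L V) (l : List (QF L V)) :
    QF.eval A (QF.bigAnd l) = true ↔ ∀ ψ ∈ l, QF.eval A ψ = true := by
  induction l with
  | nil => simp [QF.bigAnd, QF.eval]
  | cons a t ih =>
      simp only [QF.bigAnd, List.foldr] at ih ⊢
      simp [QF.eval, ih, Bool.and_eq_true]

theorem subst_bigAnd {L : Lang} {V W : Type} (s : V → Tm L W) (l : List (QF L V)) :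
    QF.subst s (QF.bigAnd l) = QF.bigAnd (l.map (QF.subst s)) := by
  induction l with
  | nil => rfl
  | cons a t ih =>
      simp only [QF.bigAnd, List.foldr, List.map] at ih ⊢
      simp [QF.subst, ih]

/-- Let `Φ = ∀x̄ φ(x̄)` be universal with quantifier-free matrix
`φ`, let `α(y_1,…,y_m)` be a quantifier-free `L`-formula, and `c_1,…,c_m` fresh
constants; closed terms of `L ∪ {c̄}` are identified with terms of `L` with variables
among `c̄` (type `Tm L (Fin m)`), the constant `c_j` itself being `Tm.var j`, and the
sentence `α(c_1,…,c_m)` being `α.subst Tm.var`.  Let `τ_{ij}` and `σ_{i1},…,σ_{im}`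
be closed terms of `L ∪ {c̄}`, let `F := ⋀_i φ(τ_{i1},…,τ_{ik})` and let `F_i` be the
result of substituting `σ_{i1},…,σ_{im}` for `c_1,…,c_m` throughout `F`.  If some
truth assignment satisfies `F ∧ ⋀_i F_i`, then some truth assignment satisfies
`⋀_i (φ(τ_{i1},…,τ_{ik}) ∧ (α(σ_{i1},…,σ_{im}) → α(c_1,…,c_m)))`. -/
theorem assignment_transfer_for_alpha {L : Lang} {k m : ℕ}
    (φ : QF L (Fin k)) (α : QF L (Fin m)) (n : ℕ)
    (τ : Fin n → Fin k → Tm L (Fin m))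
    (σ : Fin n → Fin m → Tm L (Fin m))
    (F : QF L (Fin m))
    (hF : F = QF.bigAnd (List.ofFn fun i : Fin n => φ.subst (τ i)))
    (hsat : ∃ A : Assignment L (Fin m),
      QF.eval A (QF.and F (QF.bigAnd (List.ofFn fun i : Fin n => F.subst (σ i)))) = true) :
    ∃ A' : Assignment L (Fin m),
      QF.eval A' (QF.bigAnd (List.ofFn fun i : Fin n =>
        QF.and (φ.subst (τ i))
          (QF.imp (α.subst (σ i)) (α.subst Tm.var)))) = true := by
  classical
  obtain ⟨A, hA⟩ := hsat
  simp only [QF.eval, Bool.and_eq_true] at hA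
  obtain ⟨hF1, hF2⟩ := hA
  rw [eval_bigAnd] at hF2
  by_cases hex : ∃ i : Fin n, QF.eval A (α.subst (σ i)) = true
  · obtain ⟨i0, hi0⟩ := hex
    refine ⟨A.pull (σ i0), ?_⟩
    rw [eval_bigAnd]
    intro ψ hψ
    rw [List.mem_ofFn] at hψ
    obtain ⟨i, rfl⟩ := hψ
    have hFi0 : QF.eval A (F.subst (σ i0)) = true :=
      hF2 _ (by rw [List.mem_ofFn]; exact ⟨i0, rfl⟩)
    rw [hF, subst_bigAnd, List.map_ofFn, eval_bigAnd] at hFi0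
    have hphi : QF.eval A ((φ.subst (τ i)).subst (σ i0)) = true :=
      hFi0 _ (by rw [List.mem_ofFn]; exact ⟨i, rfl⟩)
    rw [eval_subst] at hphi
    have hcons : QF.eval (A.pull (σ i0)) (α.subst Tm.var) = true := by
      rw [QF.subst_var', ← eval_subst]
      exact hi0
    simp [QF.eval, hphi, hcons]
  · push_neg at hex
    refine ⟨A, ?_⟩
    rw [eval_bigAnd]
    intro ψ hψ
    rw [List.mem_ofFn] at hψ
    obtain ⟨i, rfl⟩ := hψ
    have hphi : QF.eval A (φ.subst (τ i)) = true := by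
      rw [hF, eval_bigAnd] at hF1
      exact hF1 _ (by rw [List.mem_ofFn]; exact ⟨i, rfl⟩)
    have hant : QF.eval A (α.subst (σ i)) = false := by
      have := hex i
      simpa using this
    simp [QF.eval, hphi, hant]

end HCS
end

section
/- Let Φ = ∀x_1…∀x_k φ(x_1,…,x_k) be a universal sentence with φ quantifier-free in a language L (logic without equality), let α(y_1,…,y_m) be a quantifier-free L-formula, and let c_1,…,c_m be constants not occurring in Φ or α. If Φ ⊢ ∃y_1…∃y_m α(y_1,…,y_m), then Φ ∧ ∀y_1…∀y_m (α(y_1,…,y_m) → α(c_1,…,c_m)) ⊢ ∀x_1…∀x_k ( φ(x_1,…,x_k) ∧ α(c_1,…,c_m) ). -/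
namespace HCS

/-- Let `Φ = ∀x̄ φ(x̄)` be universal with quantifier-free matrix
`φ` in a language `L`, `α(y_1,…,y_m)` a quantifier-free `L`-formula, and `c_1,…,c_m`
constants not occurring in `Φ` or `α`.  Provability `⊢` (first-order logic without
equality) is rendered, via the completeness theorem, as semantic consequence over all
structures with nonempty domain; a structure for `L ∪ {c̄}` is a structure `M` for `L`
together with an interpretation `cI : Fin m → M.Dom` of the constants, and `α(c̄)` is
realized by evaluating `α` at `cI`.  If `Φ ⊢ ∃ȳ α(ȳ)`, then
`Φ ∧ ∀ȳ (α(ȳ) → α(c̄)) ⊢ ∀x̄ (φ(x̄) ∧ α(c̄))`. -/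
theorem skolem_constant_provability {L : Lang} {k m : ℕ}
    (φ : QF L (Fin k)) (α : QF L (Fin m))
    (hproves : ∀ M : Str L,
      (∀ v : Fin k → M.Dom, QF.realize M v φ) → ∃ w : Fin m → M.Dom, QF.realize M w α) :
    ∀ (M : Str L) (cI : Fin m → M.Dom),
      ((∀ v : Fin k → M.Dom, QF.realize M v φ) ∧
        (∀ w : Fin m → M.Dom, QF.realize M w α → QF.realize M cI α)) →
      ∀ v : Fin k → M.Dom, QF.realize M v φ ∧ QF.realize M cI α := by
  rintro M cI ⟨hφ, hα⟩ v
  obtain ⟨w, hw⟩ := hproves M hφ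
  exact ⟨hφ v, hα w hw⟩

end HCS
end
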